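/- arXiv:2504.08314 — 7 statements merged into one kernel-verified Lean document; each statement's English description precedes it below -/
import Mathlib

section
/- Let n ≥ 2 and d ≥ 1 be integers, let p_1 < p_2 < ⋯ denote the primes in increasing order, and let k be the smallest positive integer with p_1·p_2⋯p_k ≥ n^d. Then the EGH matrix M^I_{n,d} (of size (p_1+⋯+p_k) × n) is (d+1)-decodable: for every nonempty set S of at most d+1 of its columns there exists a row having exactly one entry equal to 1 among the columns of S. -/
/-!
Suppose no row isolates a column of a set `S` of at most `d + 1` columns and fix `y₀ ∈ S`.
For every block `j`, the row of that block containing `y₀` contains another column `f j ∈ S`.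
The moduli of the blocks with `f j = y` are pairwise coprime and all divide `y - y₀`, a nonzero
integer of absolute value at most `n - 1`, so their product is at most `n - 1`. Multiplying over
the at most `d` columns `y ≠ y₀` gives `p_1 ⋯ p_k ≤ (n - 1) ^ d < n ^ d`.
-/

/-- A binary matrix (rows indexed by `ρ`, columns by `γ`, with `M r c` meaning the entry
in row `r` and column `c` equals 1) is `d`-decodable if for every nonempty set `S` of at
most `d` columns there exists a row having exactly one entry equal to 1 among the columns
of `S`. -/
def DDecodable {ρ γ : Type*} (M : ρ → γ → Prop) (d : ℕ) : Prop :=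
  ∀ S : Finset γ, S.Nonempty → S.card ≤ d → ∃ r : ρ, ∃! c, c ∈ S ∧ M r c

open Finset Function

theorem prod_le_sub_of_forall_modEq {ι : Type*} {s : Finset ι} {q : ι → ℕ}
    (hq : (s : Set ι).Pairwise (Nat.Coprime on q)) {a b : ℕ} (hab : a < b)
    (h : ∀ j ∈ s, a ≡ b [MOD q j]) : ∏ j ∈ s, q j ≤ b - a := by
  have hdvd : ((∏ j ∈ s, q j : ℕ) : ℤ) ∣ (b : ℤ) - a := by
    push_cast
    exact prod_dvd_of_coprime (hq.imp fun _ _ => Nat.isCoprime_iff_coprime.mpr)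
      fun j hj => (h j hj).dvd
  have := Int.le_of_dvd (by omega) hdvd
  omega

theorem exists_mem_erase_of_not_existsUnique {ρ γ : Type*} [DecidableEq γ] {M : ρ → γ → Prop}
    {S : Finset γ} {r : ρ} (hr : ¬∃! c, c ∈ S ∧ M r c) {c₀ : γ} (hc₀ : c₀ ∈ S)
    (hM : M r c₀) : ∃ c ∈ S.erase c₀, M r c := by
  by_contra! hno
  exact hr ⟨c₀, ⟨hc₀, hM⟩, fun c ⟨hc, hMc⟩ =>
    by_contra fun hne => hno c (mem_erase.mpr ⟨hne, hc⟩) hMc⟩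

def residueMatrix {ι γ : Type*} (q : ι → ℕ) (v : γ → ℕ) (r : (j : ι) × Fin (q j)) (y : γ) :
    Prop :=
  v y % q r.1 = r.2

theorem residueMatrix_decodable {ι γ : Type*} [Fintype ι] {q : ι → ℕ}
    (hq : Pairwise (Nat.Coprime on q)) {v : γ → ℕ} (hv : Injective v) {D d : ℕ} (hD : 1 ≤ D)
    (hvD : ∀ y y', v y ≤ v y' + D) (hprod : D ^ d < ∏ j, q j) :
    DDecodable (residueMatrix q v) (d + 1) := by
  classical
  intro S ⟨y₀, hy₀⟩ hcard
  by_contra! hS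
  have hq_pos : ∀ j, 0 < q j := fun j =>
    Nat.pos_of_ne_zero ((prod_ne_zero_iff.mp (by omega)) j (mem_univ j))
  have hcollide : ∀ j, ∃ y ∈ S.erase y₀, v y ≡ v y₀ [MOD q j] := fun j =>
    exists_mem_erase_of_not_existsUnique
      (hS ⟨j, v y₀ % q j, Nat.mod_lt _ (hq_pos j)⟩) hy₀ rfl
  choose f hfS hfmod using hcollide
  have hfiber : ∀ y ∈ S.erase y₀, ∏ j with f j = y, q j ≤ D := by
    intro y hy
    have hmod : ∀ j ∈ univ.filter (f · = y), v y ≡ v y₀ [MOD q j] := fun j hj =>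
      (mem_filter.mp hj).2 ▸ hfmod j
    rcases (hv.ne (mem_erase.mp hy).1).lt_or_gt with hlt | hlt
    · exact (prod_le_sub_of_forall_modEq (hq.set_pairwise _) hlt hmod).trans
        (by have := hvD y₀ y; omega)
    · exact (prod_le_sub_of_forall_modEq (hq.set_pairwise _) hlt fun j hj => (hmod j hj).symm).trans
        (by have := hvD y y₀; omega)
  have hle : ∏ j, q j ≤ D ^ d :=
    calc ∏ j, q j = ∏ y ∈ S.erase y₀, ∏ j with f j = y, q j :=
          (prod_fiberwise_of_maps_to (fun j _ => hfS j) q).symm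
      _ ≤ ∏ _y ∈ S.erase y₀, D := prod_le_prod' hfiber
      _ = D ^ #(S.erase y₀) := prod_const D
      _ ≤ D ^ d := Nat.pow_le_pow_right hD (by rw [card_erase_of_mem hy₀]; omega)
  omega

theorem egh_matrix_succ_decodable_general (n d k : ℕ) (hn : 2 ≤ n) (hd : 1 ≤ d)
    (hprod : n ^ d ≤ ∏ j ∈ Finset.range k, Nat.nth Nat.Prime j) :
    DDecodable
      (fun (r : (j : Fin k) × Fin (Nat.nth Nat.Prime j.val)) (y : Fin n) =>
        ((y : ℕ) + 1) % Nat.nth Nat.Prime r.1.val = (r.2 : ℕ))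
      (d + 1) := by
  have hcoprime : Pairwise (Nat.Coprime on fun j : Fin k => Nat.nth Nat.Prime j) :=
    fun i j hij => (Nat.coprime_primes (Nat.prime_nth_prime i) (Nat.prime_nth_prime j)).mpr
      fun h => hij (Fin.ext (Nat.nth_injective Nat.infinite_setOfPred_prime h))
  refine residueMatrix_decodable hcoprime (v := fun y : Fin n => y + 1) (D := n - 1)
    (fun y y' h => Fin.ext (by simpa using h)) (by omega)
    (fun y y' => by have := y.isLt; omega) ?_
  calc (n - 1) ^ d < n ^ d := Nat.pow_lt_pow_left (by omega) (by omega)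
    _ ≤ ∏ j ∈ range k, Nat.nth Nat.Prime j := hprod
    _ = ∏ j : Fin k, Nat.nth Nat.Prime j := (Fin.prod_univ_eq_prod_range _ k).symm

/-- The EGH matrix `M^I_{n,d}`: rows are indexed by pairs `(j, x)` with `j ∈ {1,…,k}` and
`x ∈ {0,…,p_j − 1}` (so `p_1 + ⋯ + p_k` rows in total), columns by `y ∈ {0,…,n−1}`, and
the entry in row `(j, x)` and column `y` is 1 iff `y + 1 ≡ x (mod p_j)`.  If `k` is the
smallest positive integer with `p_1⋯p_k ≥ n^d` then this matrix is `(d+1)`-decodable. -/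
theorem egh_matrix_succ_decodable (n d k : ℕ) (hn : 2 ≤ n) (hd : 1 ≤ d) (hk : 1 ≤ k)
    (hprod : n ^ d ≤ ∏ j ∈ Finset.range k, Nat.nth Nat.Prime j)
    (hmin : ∀ k', 1 ≤ k' → k' < k →
      ∏ j ∈ Finset.range k', Nat.nth Nat.Prime j < n ^ d) :
    DDecodable
      (fun (r : (j : Fin k) × Fin (Nat.nth Nat.Prime j.val)) (y : Fin n) =>
        ((y : ℕ) + 1) % Nat.nth Nat.Prime r.1.val = (r.2 : ℕ))
      (d + 1) :=
  egh_matrix_succ_decodable_general n d k hn hd hprod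
end

section
/- Let n ≥ 2 and d ≥ 1 be integers. The EGH matrix M^I_{n,d} is a (d+1)-decodable rateless matrix: for every i with 2 ≤ i ≤ d+1, the submatrix consisting of its first m(n,i−1) = Σ_{j=1}^{k_{i−1}} p_j rows (where k_{i−1} is the smallest positive integer with Π_{k_{i−1}} ≥ n^{i−1}) is i-decodable; in particular, setting m_1 = m_2 = m(n,1) and m_i = m(n,i−1) for 2 ≤ i ≤ d+1 gives a nondecreasing decodability profile (m_1,…,m_{d+1}) with m_{d+1} equal to the number of rows of M^I_{n,d}. -/
open Finset

theorem Fin.exists_prime_forall_modEq_imp_eq {n : ℕ} {S : Finset (Fin n)} {x : Fin n}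
    (hx : x ∈ S) {P : Finset ℕ} (hP : ∀ p ∈ P, p.Prime)
    (hprod : (n - 1) ^ (#S - 1) < ∏ p ∈ P, p) :
    ∃ p ∈ P, ∀ y ∈ S, (y : ℕ) ≡ x [MOD p] → y = x := by
  by_contra! h
  set D := ∏ y ∈ S.erase x, ((x : ℤ) - y).natAbs
  have hdvd : ∏ p ∈ P, p ∣ D := by
    refine prod_primes_dvd D (fun p hp => (hP p hp).prime) fun p hp => ?_
    obtain ⟨y, hy, hyx, hne⟩ := h p hp
    exact (Int.natCast_dvd.1 (Nat.modEq_iff_dvd.1 hyx)).trans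
      (dvd_prod_of_mem _ (mem_erase.2 ⟨hne, hy⟩))
  have hD_pos : 0 < D := prod_pos fun y hy => by
    have := Fin.val_ne_of_ne (mem_erase.1 hy).1
    omega
  have hD_le : D ≤ (n - 1) ^ (#S - 1) := by
    rw [← card_erase_of_mem hx]
    exact prod_le_pow_card _ _ _ fun y _ => by omega
  exact absurd (Nat.le_of_dvd hD_pos hdvd) (by omega)

theorem sum_range_add_lt_sum_range {f : ℕ → ℕ} {j K x : ℕ} (hj : j < K) (hx : x < f j) :
    ∑ i ∈ range j, f i + x < ∑ i ∈ range K, f i :=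
  calc ∑ i ∈ range j, f i + x < ∑ i ∈ range (j + 1), f i := by
        rw [sum_range_succ]; omega
    _ ≤ ∑ i ∈ range K, f i := sum_le_sum_of_subset (range_subset_range.2 hj)

theorem prod_image_nth_prime (K : ℕ) :
    ∏ p ∈ (range K).image (Nat.nth Nat.Prime), p = ∏ j ∈ range K, Nat.nth Nat.Prime j :=
  prod_image fun _ _ _ _ h => Nat.nth_injective Nat.infinite_setOfPred_prime h

theorem dDecodable_egh_submatrix {n i K L : ℕ} (hn : 2 ≤ n) (hKL : K ≤ L)
    (hprod : (n - 1) ^ (i - 1) < ∏ j ∈ range K, Nat.nth Nat.Prime j) :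
    DDecodable
      (fun (r : {r : (j : Fin L) × Fin (Nat.nth Nat.Prime j.val) //
          (∑ j' ∈ range r.1.val, Nat.nth Nat.Prime j') + (r.2 : ℕ) <
            ∑ j ∈ range K, Nat.nth Nat.Prime j})
        (y : Fin n) => ((y : ℕ) + 1) % Nat.nth Nat.Prime r.1.1.val = (r.1.2 : ℕ))
      i := by
  intro S ⟨x, hx⟩ hcard
  have hprodS : (n - 1) ^ (#S - 1) < ∏ p ∈ (range K).image (Nat.nth Nat.Prime), p := by
    rw [prod_image_nth_prime]
    exact (Nat.pow_le_pow_right (by omega) (by omega)).trans_lt hprod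
  obtain ⟨p, hpP, hsep⟩ :=
    Fin.exists_prime_forall_modEq_imp_eq hx
      (forall_mem_image.2 fun j _ => Nat.prime_nth_prime j) hprodS
  obtain ⟨j, hjK, rfl⟩ := mem_image.1 hpP
  rw [mem_range] at hjK
  have hxj : ((x : ℕ) + 1) % Nat.nth Nat.Prime j < Nat.nth Nat.Prime j :=
    Nat.mod_lt _ (Nat.prime_nth_prime j).pos
  refine ⟨⟨⟨⟨j, hjK.trans_le hKL⟩, ⟨_, hxj⟩⟩, sum_range_add_lt_sum_range hjK hxj⟩,
    x, ⟨hx, rfl⟩, fun y ⟨hy, hyx⟩ => hsep y hy (Nat.ModEq.add_right_cancel' 1 hyx)⟩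

theorem egh_matrix_rateless_general (n d : ℕ) (hn : 2 ≤ n)
    (kf : ℕ → ℕ)
    (hkf : ∀ i, 1 ≤ i →
      1 ≤ kf i ∧ n ^ i ≤ ∏ j ∈ Finset.range (kf i), Nat.nth Nat.Prime j ∧
        ∀ k', 1 ≤ k' → k' < kf i →
          ∏ j ∈ Finset.range k', Nat.nth Nat.Prime j < n ^ i)
    (mf : ℕ → ℕ)
    (hmf : ∀ i, mf i = ∑ j ∈ Finset.range (kf i), Nat.nth Nat.Prime j) :
    (∀ i, 2 ≤ i → i ≤ d + 1 →
      DDecodable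
        (fun (r : {r : (j : Fin (kf d)) × Fin (Nat.nth Nat.Prime j.val) //
            (∑ j' ∈ Finset.range r.1.val, Nat.nth Nat.Prime j') + (r.2 : ℕ) < mf (i - 1)})
          (y : Fin n) =>
          ((y : ℕ) + 1) % Nat.nth Nat.Prime r.1.1.val = (r.1.2 : ℕ))
        i)
    ∧ 0 < mf 1
    ∧ (∀ i j, 1 ≤ i → i ≤ j → j ≤ d → mf i ≤ mf j)
    ∧ Fintype.card ((j : Fin (kf d)) × Fin (Nat.nth Nat.Prime j.val)) = mf d := by
  have hkf_mono : ∀ a b, 1 ≤ a → a ≤ b → kf a ≤ kf b := by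
    intro a b ha hab
    by_contra! hlt
    have hb := hkf b (ha.trans hab)
    have := (hkf a ha).2.2 (kf b) hb.1 hlt
    have : n ^ a ≤ n ^ b := Nat.pow_le_pow_right (by omega) hab
    omega
  refine ⟨fun i hi hid => ?_, ?_, fun a b ha hab _ => ?_, ?_⟩
  · rw [hmf]
    refine dDecodable_egh_submatrix hn (hkf_mono _ _ (by omega) (by omega)) ?_
    calc (n - 1) ^ (i - 1) < n ^ (i - 1) := Nat.pow_lt_pow_left (by omega) (by omega)
      _ ≤ _ := (hkf (i - 1) (by omega)).2.1
  · rw [hmf]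
    exact sum_pos (fun j _ => (Nat.prime_nth_prime j).pos)
      (nonempty_range_iff.2 (Nat.one_le_iff_ne_zero.1 (hkf 1 le_rfl).1))
  · rw [hmf, hmf]
    exact sum_le_sum_of_subset (range_subset_range.2 (hkf_mono a b ha hab))
  · rw [hmf, Fintype.card_sigma]
    simp only [Fintype.card_fin]
    exact Fin.sum_univ_eq_sum_range (fun j => Nat.nth Nat.Prime j) _

/-- The EGH matrix `M^I_{n,d}` (rows indexed by pairs `(j,x)`, `j ∈ {1,…,k_d}`,
`x ∈ {0,…,p_j−1}`, ordered with all rows of block `j` before those of block `j+1`, so that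
row `(j,x)` has position `p_1 + ⋯ + p_{j−1} + x`; entry at row `(j,x)`, column `y` is 1 iff
`y+1 ≡ x (mod p_j)`) is a `(d+1)`-decodable rateless matrix: for every `2 ≤ i ≤ d+1`, the
submatrix of its first `m(n,i−1) = Σ_{j≤k_{i−1}} p_j` rows is `i`-decodable; moreover the
profile `m_1 = m_2 = m(n,1)`, `m_i = m(n,i−1)` is nondecreasing (with every entry positive)
and `m_{d+1} = m(n,d)` equals the total number of rows of `M^I_{n,d}`.
Here `kf i = k_i` is the smallest positive integer with `p_1⋯p_{k_i} ≥ n^i`, and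
`mf i = m(n,i)`. -/
theorem egh_matrix_rateless (n d : ℕ) (hn : 2 ≤ n) (hd : 1 ≤ d)
    (kf : ℕ → ℕ)
    (hkf : ∀ i, 1 ≤ i →
      1 ≤ kf i ∧ n ^ i ≤ ∏ j ∈ Finset.range (kf i), Nat.nth Nat.Prime j ∧
        ∀ k', 1 ≤ k' → k' < kf i →
          ∏ j ∈ Finset.range k', Nat.nth Nat.Prime j < n ^ i)
    (mf : ℕ → ℕ)
    (hmf : ∀ i, mf i = ∑ j ∈ Finset.range (kf i), Nat.nth Nat.Prime j) :
    (∀ i, 2 ≤ i → i ≤ d + 1 →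
      DDecodable
        (fun (r : {r : (j : Fin (kf d)) × Fin (Nat.nth Nat.Prime j.val) //
            (∑ j' ∈ Finset.range r.1.val, Nat.nth Nat.Prime j') + (r.2 : ℕ) < mf (i - 1)})
          (y : Fin n) =>
          ((y : ℕ) + 1) % Nat.nth Nat.Prime r.1.1.val = (r.1.2 : ℕ))
        i)
    ∧ 0 < mf 1
    ∧ (∀ i j, 1 ≤ i → i ≤ j → j ≤ d → mf i ≤ mf j)
    ∧ Fintype.card ((j : Fin (kf d)) × Fin (Nat.nth Nat.Prime j.val)) = mf d :=
  egh_matrix_rateless_general n d hn kf hkf mf hmf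
end

section
/- Let F be a finite field with s elements, let d be an integer with 1 ≤ d ≤ s, and fix pairwise distinct nonzero elements a_1, …, a_{d−1} of F. Consider the binary matrix M with rows indexed by pairs (j, r) for j ∈ {0,…,d−1} and r ∈ F (so d·s rows) and columns indexed by pairs (x,y) ∈ F × F, where the entry in row (0, r) and column (x,y) is 1 if and only if r = x, and for 1 ≤ j ≤ d−1 the entry in row (j, r) and column (x,y) is 1 if and only if r = a_j·x + y. Then M is d-decodable. -/
/-- The OLS matrix over a finite field `F` with `s` elements: rows indexed by pairs
`(j, r)`, `j ∈ {0,…,d−1}`, `r ∈ F`; columns indexed by `(x,y) ∈ F × F`.  The entry in row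
`(0, r)` and column `(x,y)` is 1 iff `r = x`, and for `1 ≤ j ≤ d−1` the entry in row
`(j, r)` and column `(x,y)` is 1 iff `r = a_j·x + y`, where `a_1,…,a_{d−1}` are pairwise
distinct nonzero elements of `F`.  This matrix is `d`-decodable. -/
theorem ols_matrix_decodable {F : Type*} [Field F] [Fintype F]
    (s d : ℕ) (hs : Fintype.card F = s) (hd1 : 1 ≤ d) (hds : d ≤ s)
    (a : Fin (d - 1) → F) (ha : Function.Injective a) (ha0 : ∀ j, a j ≠ 0) :
    DDecodable
      (fun (row : Fin d × F) (col : F × F) =>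
        if h : row.1.val = 0 then row.2 = col.1
        else row.2 = a ⟨row.1.val - 1, by have := row.1.isLt; omega⟩ * col.1 + col.2)
      d := by
  classical
  intro S hne hcard
  obtain ⟨c, hc⟩ := hne
  set φ : Fin d → F × F → F := fun j col =>
    if h : j.val = 0 then col.1
    else a ⟨j.val - 1, by have := j.isLt; omega⟩ * col.1 + col.2 with hφ
  -- each other point agrees with c in at most one block
  have key : ∀ c' ∈ S.erase c,
      (Finset.univ.filter (fun j : Fin d => φ j c' = φ j c)).card ≤ 1 := by
    intro c' hc'
    have hne' : c' ≠ c := Finset.ne_of_mem_erase hc'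
    rw [Finset.card_le_one]
    intro j1 h1 j2 h2
    simp only [Finset.mem_filter] at h1 h2
    have e1 := h1.2
    have e2 := h2.2
    simp only [hφ] at e1 e2
    have hccne : c'.1 ≠ c.1 ∨ c'.2 ≠ c.2 := by
      by_contra h
      push_neg at h
      exact hne' (Prod.ext h.1 h.2)
    by_cases z1 : j1.val = 0 <;> by_cases z2 : j2.val = 0
    · exact Fin.ext (z1.trans z2.symm)
    · simp only [dif_pos z1, dif_neg z2] at e1 e2
      exfalso
      apply hne'
      refine Prod.ext e1 ?_
      have : a ⟨j2.val - 1, by have := j2.isLt; omega⟩ * c'.1 + c'.2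
          = a ⟨j2.val - 1, by have := j2.isLt; omega⟩ * c.1 + c.2 := e2
      rw [e1] at this
      exact add_left_cancel this
    · simp only [dif_neg z1, dif_pos z2] at e1 e2
      exfalso
      apply hne'
      refine Prod.ext e2 ?_
      rw [e2] at e1
      exact add_left_cancel e1
    · simp only [dif_neg z1, dif_neg z2] at e1 e2
      by_cases hx : c'.1 = c.1
      · exfalso
        apply hne'
        refine Prod.ext hx ?_
        rw [hx] at e1
        exact add_left_cancel e1
      · have h1' : a ⟨j1.val - 1, by have := j1.isLt; omega⟩ * (c'.1 - c.1) = c.2 - c'.2 := by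
          ring_nf
          linear_combination e1
        have h2' : a ⟨j2.val - 1, by have := j2.isLt; omega⟩ * (c'.1 - c.1) = c.2 - c'.2 := by
          ring_nf
          linear_combination e2
        have hsub : c'.1 - c.1 ≠ 0 := sub_ne_zero.mpr hx
        have : a ⟨j1.val - 1, by have := j1.isLt; omega⟩
            = a ⟨j2.val - 1, by have := j2.isLt; omega⟩ :=
          mul_right_cancel₀ hsub (h1'.trans h2'.symm)
        have := ha this
        have hv : j1.val - 1 = j2.val - 1 := congrArg Fin.val this
        exact Fin.ext (by omega)
  -- the set of "bad" blocks
  set Bad : Finset (Fin d) := (S.erase c).biUnion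
    (fun c' => Finset.univ.filter (fun j : Fin d => φ j c' = φ j c)) with hBad
  have hBadcard : Bad.card < d := by
    have h1 : Bad.card ≤ (S.erase c).card * 1 := Finset.card_biUnion_le_card_mul _ _ 1 key
    have h2 : (S.erase c).card = S.card - 1 := Finset.card_erase_of_mem hc
    have h3 : 1 ≤ S.card := Finset.card_pos.mpr ⟨c, hc⟩
    omega
  have hex : ∃ j : Fin d, j ∉ Bad := by
    by_contra h
    push_neg at h
    have : (Finset.univ : Finset (Fin d)) ⊆ Bad := fun j _ => h j
    have := Finset.card_le_card this
    simp [Finset.card_univ] at this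
    omega
  obtain ⟨j, hj⟩ := hex
  refine ⟨(j, φ j c), c, ⟨hc, ?_⟩, ?_⟩
  · simp only [hφ]
    split <;> rename_i h
    · rfl
    · rfl
  · rintro c'' ⟨hc''S, hM⟩
    simp only [hφ] at hM
    have hφeq : φ j c'' = φ j c := by
      simp only [hφ]
      by_cases h : j.val = 0
      · rw [dif_pos h, dif_pos h]
        rw [dif_pos h, dif_pos h] at hM
        exact hM.symm
      · rw [dif_neg h, dif_neg h]
        rw [dif_neg h, dif_neg h] at hM
        exact hM.symm
    by_contra hne''
    have : c'' ∈ S.erase c := Finset.mem_erase.mpr ⟨hne'', hc''S⟩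
    exact hj (Finset.mem_biUnion.mpr ⟨c'', this, Finset.mem_filter.mpr ⟨Finset.mem_univ j, hφeq⟩⟩)
end

section
/- Let F be a finite field with s elements and fix pairwise distinct nonzero elements a_1, …, a_{s−1} of F. Consider the binary matrix M with rows indexed by pairs (j, r) for j ∈ {0,…,s−1} and r ∈ F, ordered so that all rows of block j precede all rows of block j+1, and columns indexed by pairs (x,y) ∈ F × F, where the entry in row (0, r) and column (x,y) is 1 if and only if r = x, and for 1 ≤ j ≤ s−1 the entry in row (j, r) and column (x,y) is 1 if and only if r = a_j·x + y. Then M is an s-decodable rateless matrix with decodability profile m_i = i·s: for every i ∈ {1,…,s}, the submatrix formed by the first i·s rows of M (blocks 0 through i−1) is i-decodable. -/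
/-- The OLS matrix over a finite field `F` with `s` elements (rows indexed by pairs
`(j, r)`, `j ∈ {0,…,s−1}`, `r ∈ F`, all rows of block `j` preceding those of block `j+1`;
columns indexed by `(x,y) ∈ F × F`; entry in row `(0,r)`, column `(x,y)` is 1 iff `r = x`,
and in row `(j,r)`, `j ≥ 1`, is 1 iff `r = a_j·x + y`, where `a_1,…,a_{s−1}` are pairwise
distinct nonzero elements of `F`) is an `s`-decodable rateless matrix with decodability
profile `m_i = i·s`: for every `i ∈ {1,…,s}` the submatrix formed by the first `i·s` rows,
i.e. by the blocks `0,…,i−1`, is `i`-decodable. -/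
theorem ols_matrix_rateless {F : Type*} [Field F] [Fintype F]
    (s : ℕ) (hs : Fintype.card F = s)
    (a : Fin (s - 1) → F) (ha : Function.Injective a) (ha0 : ∀ j, a j ≠ 0) :
    ∀ i, 1 ≤ i → i ≤ s →
      DDecodable
        (fun (row : {p : Fin s × F // p.1.val < i}) (col : F × F) =>
          if h : row.1.1.val = 0 then row.1.2 = col.1
          else row.1.2 =
            a ⟨row.1.1.val - 1, by have := row.1.1.isLt; omega⟩ * col.1 + col.2)
        i := by
  classical
  intro i h1 hi S hSne hScard
  by_contra hno
  push_neg at hno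
  obtain ⟨c, hc⟩ := hSne
  -- line value of a column in block j
  have hbound : ∀ j : Fin s, j.val ≠ 0 → j.val - 1 < s - 1 := fun j h => by
    have := j.isLt; omega
  set lv : Fin s → F × F → F := fun j d =>
    if h : j.val = 0 then d.1 else a ⟨j.val - 1, hbound j h⟩ * d.1 + d.2 with hlv
  -- the matrix entry in row (j, r), column d is 1 iff r = lv j d
  have hM : ∀ (j : Fin s) (r : F) (hj : j.val < i) (d : F × F),
      (if h : ((⟨(j, r), hj⟩ : {p : Fin s × F // p.1.val < i}) : Fin s × F).1.val = 0
        then ((⟨(j, r), hj⟩ : {p : Fin s × F // p.1.val < i}) : Fin s × F).2 = d.1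
        else ((⟨(j, r), hj⟩ : {p : Fin s × F // p.1.val < i}) : Fin s × F).2 =
          a ⟨((⟨(j, r), hj⟩ : {p : Fin s × F // p.1.val < i}) : Fin s × F).1.val - 1,
            by have := ((⟨(j, r), hj⟩ : {p : Fin s × F // p.1.val < i}) : Fin s × F).1.isLt
               omega⟩ * d.1 + d.2) ↔ r = lv j d := by
    intro j r hj d
    simp only [hlv]
    by_cases h : j.val = 0 <;> simp [h]
  -- two distinct lines through c meet only at c
  have key : ∀ j k : Fin s, j ≠ k → ∀ d : F × F,
      lv j d = lv j c → lv k d = lv k c → d = c := by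
    intro j k hjk d hj hk
    simp only [hlv] at hj hk
    have hx : d.1 = c.1 := by
      by_cases h0 : j.val = 0
      · simpa [h0] using hj
      · by_cases k0 : k.val = 0
        · simpa [k0] using hk
        · simp only [h0, k0, dif_neg, not_false_iff] at hj hk
          have hne : a ⟨j.val - 1, hbound j h0⟩ ≠ a ⟨k.val - 1, hbound k k0⟩ := by
            intro h
            apply hjk
            have := ha h
            have hv : j.val - 1 = k.val - 1 := congrArg Fin.val this
            exact Fin.ext (by omega)
          have : (a ⟨j.val - 1, hbound j h0⟩ - a ⟨k.val - 1, hbound k k0⟩) * (d.1 - c.1) = 0 := by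
            ring_nf
            linear_combination hj - hk
          rcases mul_eq_zero.mp this with h | h
          · exact absurd (sub_eq_zero.mp h) hne
          · exact sub_eq_zero.mp h
    have hy : d.2 = c.2 := by
      by_cases h0 : j.val = 0
      · by_cases k0 : k.val = 0
        · exact absurd (Fin.ext (by omega)) hjk
        · simp only [k0, dif_neg, not_false_iff] at hk
          have := hk
          rw [hx] at this
          exact add_left_cancel this
      · simp only [h0, dif_neg, not_false_iff] at hj
        have := hj
        rw [hx] at this
        exact add_left_cancel this
    exact Prod.ext hx hy
  -- for each block j < i there is d ∈ S, d ≠ c, on the same line as c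
  have hd : ∀ j : Fin s, ∀ hj : j.val < i, ∃ d, d ∈ S ∧ lv j d = lv j c ∧ d ≠ c := by
    intro j hj
    have h := hno ⟨(j, lv j c), hj⟩
    by_contra h'
    push_neg at h'
    apply h
    refine ⟨c, ⟨hc, (hM j (lv j c) hj c).mpr rfl⟩, ?_⟩
    intro d hdp
    obtain ⟨hdS, hdM⟩ := hdp
    have hlvd : lv j c = lv j d := (hM j (lv j c) hj d).mp hdM
    exact h' d hdS hlvd.symm
  -- build an injection from Fin i into S.erase c
  have hlift : ∀ j : Fin i, ((Fin.castLE hi j : Fin s)).val < i := fun j => j.isLt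
  choose g hgS hglv hgne using fun j : Fin i => hd (Fin.castLE hi j) (hlift j)
  have hginj : Function.Injective g := by
    intro j k hjk
    by_contra hne
    have hne' : (Fin.castLE hi j : Fin s) ≠ Fin.castLE hi k :=
      fun h => hne (Fin.castLE_injective hi h)
    have : g j = c := key _ _ hne' (g j) (hglv j) (hjk ▸ hglv k)
    exact hgne j this
  have hmaps : ∀ j : Fin i, g j ∈ S.erase c := fun j =>
    Finset.mem_erase.mpr ⟨hgne j, hgS j⟩
  have hcard : i ≤ (S.erase c).card := by
    calc i = (Finset.univ : Finset (Fin i)).card := by simp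
    _ ≤ (S.erase c).card := Finset.card_le_card_of_injOn g (fun j _ => hmaps j)
        (Function.Injective.injOn hginj)
  have h2 := Finset.card_erase_of_mem hc
  have h3 : 1 ≤ S.card := Finset.card_pos.mpr ⟨c, hc⟩
  omega
end

section
/- Let n ≥ 8 be an integer and m = ⌈log₂ n⌉. The Extended Hamming matrix M^III_{n,3} is a 3-decodable rateless matrix with decodability profile (m_1, m_2, m_3) = (1, m+1, 2m+1): the submatrix consisting of its first row (the all-ones row) is 1-decodable, the submatrix consisting of its first m+1 rows (the all-ones row together with the bit rows) is 2-decodable, and the full (2m+1) × n matrix is 3-decodable. -/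
/-- Entry of the Extended Hamming matrix `M^III_{n,3}` (with `m = ⌈log₂ n⌉`): row `0` is
the all-ones row; for `t ∈ {1,…,m}`, row `t` in column `c` carries the `(t−1)`-th binary
digit of `c`; and row `m+t` carries its complement. -/
def ExtHammingEntry (n m : ℕ) (r : Fin (2 * m + 1)) (c : Fin n) : Prop :=
  if r.val = 0 then True
  else if r.val ≤ m then Nat.testBit c.val (r.val - 1) = true
  else Nat.testBit c.val (r.val - m - 1) = false

/-!
Two distinct columns `a, b < n ≤ 2^m` differ in some bit `t < m`. Split a set `S` of columns
containing both according to bit `t`: both classes are nonempty, so if `|S| ≤ 3` one of them is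
a singleton, isolated by bit row `t` (class of ones) or by complemented bit row `t` (class of
zeros); if `|S| = 2` both are singletons and the bit row alone suffices. Singletons are
isolated by the all-ones row.
-/

lemma DDecodable.of_forall_nontrivial {ρ γ : Type*} {M : ρ → γ → Prop} {d : ℕ} (r₀ : ρ)
    (hr₀ : ∀ c, M r₀ c)
    (h : ∀ S : Finset γ, S.Nontrivial → S.card ≤ d → ∃ r, ∃! c, c ∈ S ∧ M r c) :
    DDecodable M d := by
  intro S hS hcard
  obtain ⟨a, rfl⟩ | hS := hS.exists_eq_singleton_or_nontrivial
  · exact ⟨r₀, a, ⟨Finset.mem_singleton_self a, hr₀ a⟩, fun c hc => Finset.mem_singleton.mp hc.1⟩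
  · exact h S hS hcard

namespace Finset

variable {γ : Type*} {S : Finset γ} {p : γ → Prop} [DecidablePred p] {a b : γ}

lemma existsUnique_of_card_filter_eq_one (h : (S.filter p).card = 1) :
    ∃! c, c ∈ S ∧ p c := by
  simpa only [mem_filter] using card_eq_one_iff_existsUnique.mp h

lemma card_filter_eq_one_of_card_le_two (hS : S.card ≤ 2) (ha : a ∈ S) (hpa : p a)
    (hb : b ∈ S) (hpb : ¬p b) : (S.filter p).card = 1 := by
  have hp : 0 < (S.filter p).card := card_pos.mpr ⟨a, mem_filter.mpr ⟨ha, hpa⟩⟩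
  have hnp : 0 < (S.filter (¬p ·)).card := card_pos.mpr ⟨b, mem_filter.mpr ⟨hb, hpb⟩⟩
  have := card_filter_add_card_filter_not (s := S) p
  omega

lemma card_filter_eq_one_or_card_filter_not_eq_one (hS : S.card ≤ 3) (ha : a ∈ S) (hpa : p a)
    (hb : b ∈ S) (hpb : ¬p b) : (S.filter p).card = 1 ∨ (S.filter (¬p ·)).card = 1 := by
  have hp : 0 < (S.filter p).card := card_pos.mpr ⟨a, mem_filter.mpr ⟨ha, hpa⟩⟩
  have hnp : 0 < (S.filter (¬p ·)).card := card_pos.mpr ⟨b, mem_filter.mpr ⟨hb, hpb⟩⟩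
  have := card_filter_add_card_filter_not (s := S) p
  omega

end Finset

section ExtHamming

variable {n m : ℕ}

lemma extHammingEntry_zero (c : Fin n) : ExtHammingEntry n m 0 c := by
  simp [ExtHammingEntry]

lemma extHammingEntry_bit_iff {t : ℕ} (ht : t < m) (c : Fin n) :
    ExtHammingEntry n m ⟨t + 1, by omega⟩ c ↔ c.val.testBit t = true := by
  simp [ExtHammingEntry, Nat.succ_le_of_lt ht]

lemma extHammingEntry_compl_iff {t : ℕ} (ht : t < m) (c : Fin n) :
    ExtHammingEntry n m ⟨m + t + 1, by omega⟩ c ↔ c.val.testBit t = false := by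
  have hrow : m + t + 1 - m - 1 = t := by omega
  simp [ExtHammingEntry, hrow]

lemma exists_lt_testBit_ne (h : n ≤ 2 ^ m) {a b : Fin n} (hab : a ≠ b) :
    ∃ t < m, a.val.testBit t ≠ b.val.testBit t := by
  obtain ⟨t, ht⟩ := Nat.exists_testBit_ne_of_ne (Fin.val_ne_of_ne hab)
  refine ⟨t, lt_of_not_ge fun hmt => ht ?_, ht⟩
  have hlt (c : Fin n) : c.val < 2 ^ t :=
    c.isLt.trans_le (h.trans (Nat.pow_le_pow_right two_pos hmt))
  rw [Nat.testBit_lt_two_pow (hlt a), Nat.testBit_lt_two_pow (hlt b)]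

lemma Finset.Nontrivial.exists_testBit_true_false (h : n ≤ 2 ^ m) {S : Finset (Fin n)}
    (hS : S.Nontrivial) :
    ∃ t < m, ∃ x ∈ S, ∃ y ∈ S, x.val.testBit t = true ∧ y.val.testBit t = false := by
  obtain ⟨a, ha, b, hb, hab⟩ := hS
  obtain ⟨t, ht, hbit⟩ := exists_lt_testBit_ne h hab
  refine ⟨t, ht, ?_⟩
  cases hat : a.val.testBit t
  · exact ⟨b, hb, a, ha, by simpa [hat] using hbit.symm, hat⟩
  · exact ⟨a, ha, b, hb, hat, by simpa [hat] using hbit.symm⟩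

lemma exists_extHammingBitRow_isolating (h : n ≤ 2 ^ m) {S : Finset (Fin n)} (hS : S.Nontrivial)
    (hcard : S.card ≤ 2) :
    ∃ r : Fin (2 * m + 1), r.val < m + 1 ∧ ∃! c, c ∈ S ∧ ExtHammingEntry n m r c := by
  obtain ⟨t, ht, x, hx, y, hy, hxt, hyt⟩ := hS.exists_testBit_true_false h
  refine ⟨⟨t + 1, by omega⟩, by simpa using ht, ?_⟩
  simpa only [extHammingEntry_bit_iff ht] using Finset.existsUnique_of_card_filter_eq_one
    (Finset.card_filter_eq_one_of_card_le_two (p := fun c : Fin n => c.val.testBit t = true)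
      hcard hx hxt hy (by simp [hyt]))

lemma exists_extHammingRow_isolating (h : n ≤ 2 ^ m) {S : Finset (Fin n)} (hS : S.Nontrivial)
    (hcard : S.card ≤ 3) : ∃ r : Fin (2 * m + 1), ∃! c, c ∈ S ∧ ExtHammingEntry n m r c := by
  obtain ⟨t, ht, x, hx, y, hy, hxt, hyt⟩ := hS.exists_testBit_true_false h
  rcases Finset.card_filter_eq_one_or_card_filter_not_eq_one
    (p := fun c : Fin n => c.val.testBit t = true) hcard hx hxt hy (by simp [hyt]) with h1 | h0
  · refine ⟨⟨t + 1, by omega⟩, ?_⟩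
    simpa only [extHammingEntry_bit_iff ht] using Finset.existsUnique_of_card_filter_eq_one h1
  · refine ⟨⟨m + t + 1, by omega⟩, ?_⟩
    simpa only [extHammingEntry_compl_iff ht, Bool.not_eq_true] using
      Finset.existsUnique_of_card_filter_eq_one h0

end ExtHamming

theorem extended_hamming_rateless_general (n m : ℕ) (hm : m = Nat.clog 2 n) :
    DDecodable
      (fun (r : {r : Fin (2 * m + 1) // r.val < 1}) (c : Fin n) =>
        ExtHammingEntry n m r.1 c) 1 ∧
    DDecodable
      (fun (r : {r : Fin (2 * m + 1) // r.val < m + 1}) (c : Fin n) =>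
        ExtHammingEntry n m r.1 c) 2 ∧
    DDecodable
      (fun (r : Fin (2 * m + 1)) (c : Fin n) => ExtHammingEntry n m r c) 3 := by
  have hn : n ≤ 2 ^ m := hm ▸ Nat.le_pow_clog one_lt_two n
  refine ⟨?_, ?_, ?_⟩
  · refine .of_forall_nontrivial ⟨0, by simp⟩ extHammingEntry_zero fun S hS hcard => ?_
    exact absurd (Finset.one_lt_card_iff_nontrivial.mpr hS) (by omega)
  · refine .of_forall_nontrivial ⟨0, by simp⟩ extHammingEntry_zero fun S hS hcard => ?_
    obtain ⟨r, hr, hiso⟩ := exists_extHammingBitRow_isolating hn hS hcard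
    exact ⟨⟨r, hr⟩, hiso⟩
  · exact .of_forall_nontrivial 0 extHammingEntry_zero fun S hS hcard =>
      exists_extHammingRow_isolating hn hS hcard

/-- For `n ≥ 8` and `m = ⌈log₂ n⌉`, the Extended Hamming matrix `M^III_{n,3}` is a
3-decodable rateless matrix with decodability profile `(1, m+1, 2m+1)`: its first row is
1-decodable, its first `m+1` rows are 2-decodable, and the full `(2m+1) × n` matrix is
3-decodable. -/
theorem extended_hamming_rateless (n m : ℕ) (hn : 8 ≤ n) (hm : m = Nat.clog 2 n) :
    DDecodable
      (fun (r : {r : Fin (2 * m + 1) // r.val < 1}) (c : Fin n) =>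
        ExtHammingEntry n m r.1 c) 1 ∧
    DDecodable
      (fun (r : {r : Fin (2 * m + 1) // r.val < m + 1}) (c : Fin n) =>
        ExtHammingEntry n m r.1 c) 2 ∧
    DDecodable
      (fun (r : Fin (2 * m + 1)) (c : Fin n) => ExtHammingEntry n m r c) 3 :=
  extended_hamming_rateless_general n m hm
end

section
/- Let d be a positive integer and let M be a binary matrix such that every column of M contains at least d entries equal to 1, and for every two distinct columns of M there is at most one row in which both columns have the entry 1. Then M is d-decodable. -/
/-- If every column of a binary matrix contains at least `d` ones (there is a set of `d`
rows all carrying a 1 in that column), and every two distinct columns share a 1 in at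
most one common row, then the matrix is `d`-decodable. -/
theorem col_weight_intersection_decodable {ρ γ : Type*} (M : ρ → γ → Prop) (d : ℕ)
    (hd : 1 ≤ d)
    (hcol : ∀ c, ∃ T : Finset ρ, T.card = d ∧ ∀ r ∈ T, M r c)
    (hpair : ∀ c₁ c₂, c₁ ≠ c₂ →
      ∀ r₁ r₂, M r₁ c₁ → M r₁ c₂ → M r₂ c₁ → M r₂ c₂ → r₁ = r₂) :
    DDecodable M d := by
  classical
  intro S hS hcard
  obtain ⟨c₀, hc₀⟩ := hS
  obtain ⟨T, hTcard, hT⟩ := hcol c₀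
  set B := (S.erase c₀).biUnion (fun c => T.filter (fun r => M r c)) with hB
  have hBcard : B.card ≤ S.card - 1 := by
    calc B.card ≤ ∑ c ∈ S.erase c₀, (T.filter (fun r => M r c)).card :=
          Finset.card_biUnion_le
      _ ≤ ∑ _c ∈ S.erase c₀, 1 := by
          apply Finset.sum_le_sum
          intro c hc
          apply Finset.card_le_one.mpr
          intro r₁ hr₁ r₂ hr₂
          rw [Finset.mem_filter] at hr₁ hr₂
          exact hpair c c₀ (Finset.mem_erase.mp hc).1 r₁ r₂ hr₁.2 (hT r₁ hr₁.1)
            hr₂.2 (hT r₂ hr₂.1)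
      _ = S.card - 1 := by simp [Finset.card_erase_of_mem hc₀]
  have hlt : B.card < T.card := by
    have h1 : 1 ≤ S.card := Finset.card_pos.mpr ⟨c₀, hc₀⟩
    omega
  have hns : ¬ T ⊆ B := fun h => absurd (Finset.card_le_card h) (by omega)
  obtain ⟨r, hrT, hrB⟩ := Finset.not_subset.mp hns
  refine ⟨r, c₀, ⟨hc₀, hT r hrT⟩, ?_⟩
  rintro c ⟨hcS, hMc⟩
  by_contra hne
  exact hrB (Finset.mem_biUnion.mpr ⟨c, Finset.mem_erase.mpr ⟨hne, hcS⟩,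
    Finset.mem_filter.mpr ⟨hrT, hMc⟩⟩)
end

section
/- Let n ≥ 2 and d ≥ 1 be integers, let p_1 < p_2 < ⋯ denote the primes, and let k be a positive integer with p_1·p_2⋯p_k ≥ n^d. Then for every y ∈ {0,…,n−1} and every finite set T ⊆ {0,…,n−1} with y ∉ T and |T| ≤ d, there exists an index j ∈ {1,…,k} such that y mod p_j ≠ z mod p_j for every z ∈ T. -/
/-!
If every one of the first `k` primes failed to separate `y` from `T`, each of them would divide
some `|y - z|` with `z ∈ T`, so their product, the primes being pairwise coprime, would divide `∏_{z ∈ T} |y - z|`. That product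
is positive (as `y ∉ T`) and smaller than `n ^ |T| ≤ n ^ d`, which is at most the product of the
primes.
-/

open Finset Function

namespace Nat

theorem ModEq.dvd_dist {m y z : ℕ} (h : y ≡ z [MOD m]) : m ∣ y.dist z := by
  rcases le_total y z with hyz | hzy
  · rw [dist_eq_sub_of_le hyz]
    exact (modEq_iff_dvd' hyz).1 h
  · rw [dist_eq_sub_of_le_right hzy]
    exact (modEq_iff_dvd' hzy).1 h.symm

theorem prod_dist_lt_pow_card {n y : ℕ} {T : Finset ℕ} (hy : y < n) (hT : ∀ z ∈ T, z < n)
    (hyT : y ∉ T) (hTne : T.Nonempty) : ∏ z ∈ T, y.dist z < n ^ #T := by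
  rw [← prod_const]
  refine prod_lt_prod_of_nonempty (fun z hz ↦ dist_pos_of_ne fun hyz ↦ hyT (hyz ▸ hz))
    (fun z hz ↦ ?_) hTne
  have := hT z hz
  unfold Nat.dist
  omega

theorem exists_forall_mod_ne_of_prod_dist_lt {ι : Type*} {s : Finset ι} {m : ι → ℕ}
    (hm : (s : Set ι).Pairwise (Coprime on m)) {y : ℕ} {T : Finset ℕ} (hyT : y ∉ T)
    (hlt : ∏ z ∈ T, y.dist z < ∏ i ∈ s, m i) : ∃ i ∈ s, ∀ z ∈ T, y % m i ≠ z % m i := by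
  by_contra! h
  have hdvd : ∏ i ∈ s, m i ∣ ∏ z ∈ T, y.dist z := by
    rw [← lcm_eq_prod hm]
    refine Finset.lcm_dvd fun i hi ↦ ?_
    obtain ⟨z, hz, hyz⟩ := h i hi
    exact (ModEq.dvd_dist hyz).trans (dvd_prod_of_mem _ hz)
  have hpos : 0 < ∏ z ∈ T, y.dist z :=
    prod_pos fun z hz ↦ dist_pos_of_ne fun hyz ↦ hyT (hyz ▸ hz)
  exact (le_of_dvd hpos hdvd).not_gt hlt

theorem pairwise_coprime_nth_prime (s : Finset ℕ) :
    (s : Set ℕ).Pairwise (Coprime on nth Nat.Prime) := fun _ _ _ _ hij ↦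
  (coprime_primes (prime_nth_prime _) (prime_nth_prime _)).2
    ((nth_injective infinite_setOfPred_prime).ne hij)

end Nat

/-- `Nat.nth Nat.Prime j` is the `(j+1)`-th prime, so `j < k` ranges over the first `k` primes. -/
theorem egh_separation_general (n d k : ℕ) (hk : 1 ≤ k)
    (hprod : n ^ d ≤ ∏ j ∈ Finset.range k, Nat.nth Nat.Prime j)
    (y : ℕ) (hy : y < n) (T : Finset ℕ) (hT : ∀ z ∈ T, z < n) (hyT : y ∉ T)
    (hcard : T.card ≤ d) :
    ∃ j < k, ∀ z ∈ T,
      y % Nat.nth Nat.Prime j ≠ z % Nat.nth Nat.Prime j := by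
  rcases T.eq_empty_or_nonempty with rfl | hTne
  · exact ⟨0, hk, by simp⟩
  have hlt : ∏ z ∈ T, y.dist z < ∏ j ∈ range k, Nat.nth Nat.Prime j :=
    calc ∏ z ∈ T, y.dist z < n ^ #T := Nat.prod_dist_lt_pow_card hy hT hyT hTne
      _ ≤ n ^ d := Nat.pow_le_pow_right (by omega) hcard
      _ ≤ _ := hprod
  obtain ⟨j, hj, hsep⟩ :=
    Nat.exists_forall_mod_ne_of_prod_dist_lt (Nat.pairwise_coprime_nth_prime _) hyT hlt
  exact ⟨j, mem_range.1 hj, hsep⟩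

/-- The number-theoretic separation property underlying the EGH construction: if the
product of the first `k` primes is at least `n^d`, then any `y ∈ {0,…,n−1}` can be
separated from any set `T ⊆ {0,…,n−1}` of at most `d` elements not containing `y` by at
least one of the first `k` primes: there is `j < k` such that `y` and every `z ∈ T`
have different residues modulo `p_j` (where `Nat.nth Nat.Prime j` is the `(j+1)`-th
prime). -/
theorem egh_separation (n d k : ℕ) (hn : 2 ≤ n) (hd : 1 ≤ d) (hk : 1 ≤ k)
    (hprod : n ^ d ≤ ∏ j ∈ Finset.range k, Nat.nth Nat.Prime j)
    (y : ℕ) (hy : y < n) (T : Finset ℕ) (hT : ∀ z ∈ T, z < n) (hyT : y ∉ T)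
    (hcard : T.card ≤ d) :
    ∃ j < k, ∀ z ∈ T,
      y % Nat.nth Nat.Prime j ≠ z % Nat.nth Nat.Prime j :=
  egh_separation_general n d k hk hprod y hy T hT hyT hcard
end
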